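/- arXiv:2101.10269 — 3 statements merged into one kernel-verified Lean document; each statement's English description precedes it below -/
import Mathlib

section
/- Let K and K̂ be invertible l×l binary matrices such that K̂ is obtained from K by adding row i to row j with j < i. Then K and K̂ have the same partial distance profile: for all φ ∈ [l], D_φ(K̂) = D_φ(K). -/
/-- Hamming distance from a vector `v` to a set (code) `C` in `𝔽₂ⁿ`. -/
noncomputable def distTo {n : ℕ} (C : Set (Fin n → ZMod 2)) (v : Fin n → ZMod 2) : ℕ :=
  sInf ((fun c => hammingDist v c) '' C)

/-- Minimum distance of a code: minimum Hamming weight of its nonzero elements. -/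
noncomputable def minDist {n : ℕ} (C : Set (Fin n → ZMod 2)) : ℕ :=
  sInf (hammingNorm '' (C \ {0}))

/-- The kernel code `C_K^{(φ)}`: the span of rows `φ, …, l−1` of `K`. -/
def kernelCode {l : ℕ} (K : Matrix (Fin l) (Fin l) (ZMod 2)) (φ : ℕ) :
    Submodule (ZMod 2) (Fin l → ZMod 2) :=
  Submodule.span (ZMod 2) {v | ∃ i : Fin l, φ ≤ (i : ℕ) ∧ v = K i}

/-- The `i`-th partial distance of `K`: distance from row `i` to the span of rows `i+1, …, l−1`. -/
noncomputable def PD {l : ℕ} (K : Matrix (Fin l) (Fin l) (ZMod 2)) (i : Fin l) : ℕ :=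
  distTo (kernelCode K ((i : ℕ) + 1) : Set (Fin l → ZMod 2)) (K i)

lemma distTo_add_mem {n : ℕ} (C : Submodule (ZMod 2) (Fin n → ZMod 2))
    (v c : Fin n → ZMod 2) (hc : c ∈ C) :
    distTo (C : Set (Fin n → ZMod 2)) (v + c) = distTo (C : Set (Fin n → ZMod 2)) v := by
  unfold distTo
  congr 1
  ext m
  constructor
  · rintro ⟨w, hw, rfl⟩
    refine ⟨w - c, C.sub_mem hw hc, ?_⟩
    simp only [hammingDist_eq_hammingNorm]
    congr 1; abel
  · rintro ⟨w, hw, rfl⟩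
    refine ⟨w + c, C.add_mem hw hc, ?_⟩
    simp only [hammingDist_eq_hammingNorm]
    congr 1; abel

theorem stmt_2 {l : ℕ} (K : Matrix (Fin l) (Fin l) (ZMod 2)) (hK : IsUnit K.det)
    (i j : Fin l) (hij : j < i)
    (Khat : Matrix (Fin l) (Fin l) (ZMod 2))
    (hKhat : Khat = Matrix.updateRow K j (K j + K i)) :
    ∀ φ : Fin l, PD Khat φ = PD K φ := by
  have hji : (j : ℕ) < (i : ℕ) := hij
  have hrow : ∀ k : Fin l, k ≠ j → Khat k = K k := by
    intro k hk; rw [hKhat, Matrix.updateRow_ne hk]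
  have hrowj : Khat j = K j + K i := by rw [hKhat, Matrix.updateRow_self]
  have hadd : ∀ v : Fin l → ZMod 2, v + v = 0 := by
    intro v; funext t; exact CharTwo.add_self_eq_zero _
  intro φ
  have hspan : kernelCode Khat ((φ : ℕ) + 1) = kernelCode K ((φ : ℕ) + 1) := by
    by_cases h : (φ : ℕ) + 1 ≤ (j : ℕ)
    · -- row j is among the generators; span unchanged
      apply le_antisymm
      · apply Submodule.span_le.mpr
        rintro v ⟨k, hk, rfl⟩
        by_cases hkj : k = j
        · rw [hkj, hrowj]
          exact Submodule.add_mem _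
            (Submodule.subset_span ⟨j, h, rfl⟩)
            (Submodule.subset_span ⟨i, by omega, rfl⟩)
        · rw [hrow k hkj]
          exact Submodule.subset_span ⟨k, hk, rfl⟩
      · apply Submodule.span_le.mpr
        rintro v ⟨k, hk, rfl⟩
        by_cases hkj : k = j
        · have hij' : i ≠ j := by intro he; rw [he] at hji; omega
          have : K k = Khat j + Khat i := by
            rw [hkj, hrowj, hrow i hij', add_assoc, hadd, add_zero]
          rw [this]
          exact Submodule.add_mem _
            (Submodule.subset_span ⟨j, h, rfl⟩)
            (Submodule.subset_span ⟨i, by omega, rfl⟩)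
        · rw [← hrow k hkj]
          exact Submodule.subset_span ⟨k, hk, rfl⟩
    · -- all generator rows have index > j, hence unchanged
      unfold kernelCode
      congr 1
      ext v
      constructor
      · rintro ⟨k, hk, rfl⟩
        exact ⟨k, hk, hrow k (by intro he; rw [he] at hk; omega)⟩
      · rintro ⟨k, hk, rfl⟩
        exact ⟨k, hk, (hrow k (by intro he; rw [he] at hk; omega)).symm⟩
  by_cases hphij : φ = j
  · subst hphij
    unfold PD
    rw [hspan, hrowj]
    exact distTo_add_mem _ _ _ (Submodule.subset_span ⟨i, by omega, rfl⟩)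
  · unfold PD
    rw [hspan, hrow φ hphij]
end

section
/- Let K be an l×l invertible binary matrix with partial distances D_0, …, D_{l−1}. Then for every φ ∈ {0,…,l−1}, the minimum distance of the kernel code C_K^{(φ)} (the span of rows φ,…,l−1 of K) equals min{D_i : φ ≤ i ≤ l−1}. -/
/-!
A nonzero codeword `x` of `C_K^{(φ)}` lies in some `C_K^{(i)} \ C_K^{(i+1)}` with `i ≥ φ`; over `𝔽₂`
it then has the form `K i - c` with `c ∈ C_K^{(i+1)}`, so its weight is at least `D_i`. Conversely a
nearest point `c` to `K i` in `C_K^{(i+1)}` gives the codeword `K i - c` of weight `D_i`, which is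
nonzero because the rows of the invertible matrix `K` are linearly independent. Each of the two
sets of values thus dominates the other, so their infima agree, also when `φ ≥ l` and both are empty.
-/

theorem hammingDist_eq_hammingNorm_sub {ι : Type*} [Fintype ι] {β : ι → Type*}
    [∀ i, AddGroup (β i)] [∀ i, DecidableEq (β i)] (x y : ∀ i, β i) :
    hammingDist x y = hammingNorm (x - y) := by
  simp_rw [hammingNorm, hammingDist, Pi.sub_apply, ne_eq, sub_eq_zero]

section KernelCode

variable {l : ℕ} (K : Matrix (Fin l) (Fin l) (ZMod 2))

theorem kernelCode_eq_span_image (φ : ℕ) :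
    kernelCode K φ = Submodule.span (ZMod 2) (K.row '' {i | φ ≤ (i : ℕ)}) := by
  rw [kernelCode]
  congr 1
  ext v
  exact ⟨fun ⟨i, hi, hv⟩ => ⟨i, hi, hv.symm⟩, fun ⟨i, hi, hv⟩ => ⟨i, hi, hv.symm⟩⟩

theorem kernelCode_eq_bot_of_le {φ : ℕ} (h : l ≤ φ) : kernelCode K φ = ⊥ := by
  have hempty : {i : Fin l | φ ≤ (i : ℕ)} = ∅ :=
    Set.eq_empty_of_forall_notMem fun i hi => absurd (lt_of_lt_of_le i.2 h) (not_lt.mpr hi)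
  rw [kernelCode_eq_span_image, hempty, Set.image_empty, Submodule.span_empty]

theorem kernelCode_anti {φ ψ : ℕ} (h : φ ≤ ψ) : kernelCode K ψ ≤ kernelCode K φ :=
  Submodule.span_mono fun _ ⟨i, hi, hv⟩ => ⟨i, h.trans hi, hv⟩

theorem row_mem_kernelCode (i : Fin l) : K i ∈ kernelCode K i :=
  Submodule.subset_span ⟨i, le_rfl, rfl⟩

theorem row_notMem_kernelCode_succ (hK : IsUnit K.det) (i : Fin l) :
    K i ∉ kernelCode K (i + 1) := by
  have hrows : LinearIndependent (ZMod 2) K.row :=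
    Matrix.linearIndependent_rows_iff_isUnit.mpr ((Matrix.isUnit_iff_isUnit_det K).mpr hK)
  rw [kernelCode_eq_span_image]
  exact hrows.notMem_span_image (s := {j | (i : ℕ) + 1 ≤ j}) (by simp)

theorem kernelCode_eq_span_singleton_sup {φ : ℕ} (hφ : φ < l) :
    kernelCode K φ = (ZMod 2) ∙ K ⟨φ, hφ⟩ ⊔ kernelCode K (φ + 1) := by
  rw [kernelCode, kernelCode, ← Submodule.span_insert]
  congr 1
  ext v
  constructor
  · rintro ⟨i, hi, rfl⟩
    rcases hi.eq_or_lt with h | h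
    · exact Or.inl (congrArg K (Fin.ext h.symm))
    · exact Or.inr ⟨i, h, rfl⟩
  · rintro (rfl | ⟨i, hi, rfl⟩)
    · exact ⟨⟨φ, hφ⟩, le_rfl, rfl⟩
    · exact ⟨i, by omega, rfl⟩

theorem mem_kernelCode_succ_or_eq_row_sub {φ : ℕ} (hφ : φ < l) {x : Fin l → ZMod 2}
    (hx : x ∈ kernelCode K φ) :
    x ∈ kernelCode K (φ + 1) ∨ ∃ c ∈ kernelCode K (φ + 1), x = K ⟨φ, hφ⟩ - c := by
  rw [kernelCode_eq_span_singleton_sup K hφ, Submodule.mem_sup] at hx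
  obtain ⟨y, hy, z, hz, rfl⟩ := hx
  obtain ⟨a, rfl⟩ := Submodule.mem_span_singleton.mp hy
  obtain rfl | rfl : a = 0 ∨ a = 1 :=
    (by decide : ∀ b : ZMod 2, b = 0 ∨ b = 1) a
  · left
    simpa using hz
  · right
    exact ⟨-z, neg_mem hz, by simp⟩

theorem PD_le_hammingDist {i : Fin l} {c : Fin l → ZMod 2} (hc : c ∈ kernelCode K (i + 1)) :
    PD K i ≤ hammingDist (K i) c :=
  Nat.sInf_le ⟨c, hc, rfl⟩

theorem exists_PD_le_hammingNorm {φ : ℕ} {x : Fin l → ZMod 2} (hx : x ∈ kernelCode K φ)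
    (hx0 : x ≠ 0) : ∃ i : Fin l, φ ≤ (i : ℕ) ∧ PD K i ≤ hammingNorm x := by
  by_cases hφ : φ < l
  · rcases mem_kernelCode_succ_or_eq_row_sub K hφ hx with hsucc | ⟨c, hc, rfl⟩
    · obtain ⟨i, hi, hle⟩ := exists_PD_le_hammingNorm hsucc hx0
      exact ⟨i, by omega, hle⟩
    · refine ⟨⟨φ, hφ⟩, le_rfl, ?_⟩
      rw [← hammingDist_eq_hammingNorm_sub]
      exact PD_le_hammingDist K hc
  · rw [kernelCode_eq_bot_of_le K (not_lt.mp hφ), Submodule.mem_bot] at hx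
    exact absurd hx hx0
termination_by l - φ

theorem exists_hammingNorm_eq_PD (hK : IsUnit K.det) (i : Fin l) :
    ∃ x ∈ kernelCode K i, x ≠ 0 ∧ hammingNorm x = PD K i := by
  obtain ⟨c, hc, hdist⟩ : PD K i ∈ (fun c => hammingDist (K i) c) '' (kernelCode K (i + 1)) :=
    Nat.sInf_mem ⟨_, 0, zero_mem _, rfl⟩
  refine ⟨K i - c, sub_mem (row_mem_kernelCode K i) (kernelCode_anti K (Nat.le_succ _) hc), ?_, ?_⟩
  · rw [sub_ne_zero]
    rintro rfl
    exact row_notMem_kernelCode_succ K hK i hc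
  · rw [← hammingDist_eq_hammingNorm_sub]
    exact hdist

end KernelCode

theorem stmt_6_general {l : ℕ} (K : Matrix (Fin l) (Fin l) (ZMod 2)) (hK : IsUnit K.det)
    (φ : ℕ) :
    minDist (kernelCode K φ : Set (Fin l → ZMod 2))
      = sInf {d | ∃ i : Fin l, φ ≤ (i : ℕ) ∧ d = PD K i} := by
  apply csInf_eq_csInf_of_forall_exists_le
  · rintro _ ⟨x, ⟨hx, hx0⟩, rfl⟩
    obtain ⟨i, hi, hle⟩ := exists_PD_le_hammingNorm K hx hx0
    exact ⟨_, ⟨i, hi, rfl⟩, hle⟩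
  · rintro _ ⟨i, hi, rfl⟩
    obtain ⟨x, hx, hx0, hnorm⟩ := exists_hammingNorm_eq_PD K hK i
    exact ⟨_, ⟨x, ⟨kernelCode_anti K hi hx, hx0⟩, rfl⟩, hnorm.le⟩

theorem stmt_6 {l : ℕ} (K : Matrix (Fin l) (Fin l) (ZMod 2)) (hK : IsUnit K.det)
    (φ : ℕ) (hφ : φ < l) :
    minDist (kernelCode K φ : Set (Fin l → ZMod 2))
      = sInf {d | ∃ i : Fin l, φ ≤ (i : ℕ) ∧ d = PD K i} :=
  stmt_6_general K hK φ
end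

section
/- Let D_0, D_1, …, D_{l−1} be a nondecreasing sequence of positive integers that is the partial distance profile of some l×l invertible binary kernel. Then for every i with 0 ≤ i < l, the inequality Σ_{i'=i}^{l−1} 2^{l−i'} · D_{i'} ≤ 2^{l−i} · l holds. -/
/-!
Write `C φ` for the span of the rows `φ, …, l - 1` of `K`; invertibility gives
`|C φ| = 2 ^ (l - φ)`. Over `𝔽₂` a word of `C i \ C (i + 1)` has coefficient `1` on row `i`,
so it is `K i - w` with `w ∈ C (i + 1)` and its weight is at least `PD K i`. The layers
`C i' \ C (i' + 1)`, `i' ≥ i`, of sizes `2 ^ (l - i' - 1)`, partition `C i \ {0}`, so the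
left-hand side is at most twice the total weight of `C i`. Plotkin's averaging bounds that: in
each coordinate at most half the words of the linear code `C i` are nonzero.
-/

open Finset

section BinaryWords

variable {ι : Type*}

theorem two_mul_card_filter_ne_zero_le {s : Finset (ι → ZMod 2)}
    (hs : ∀ a ∈ s, ∀ b ∈ s, a + b ∈ s) (t : ι) :
    2 * #{c ∈ s | c t ≠ 0} ≤ #s := by
  rcases (s.filter (fun c => c t ≠ 0)).eq_empty_or_nonempty with h | ⟨c₀, hc₀⟩
  · simp [h]
  rw [mem_filter] at hc₀
  have hsum : ∀ x y : ZMod 2, x ≠ 0 → y ≠ 0 → x + y = 0 := by decide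
  have htranslate : #{c ∈ s | c t ≠ 0} ≤ #{c ∈ s | ¬c t ≠ 0} :=
    card_le_card_of_injOn (· + c₀)
      (fun c hc => by
        simp only [coe_filter, Set.mem_ofPred_eq] at hc ⊢
        exact ⟨hs c hc.1 c₀ hc₀.1, by simpa using hsum _ _ hc.2 hc₀.2⟩)
      (add_left_injective c₀).injOn
  have := card_filter_add_card_filter_not (s := s) (fun c => c t ≠ 0)
  omega

theorem two_mul_sum_hammingNorm_le [Fintype ι] {s : Finset (ι → ZMod 2)}
    (hs : ∀ a ∈ s, ∀ b ∈ s, a + b ∈ s) :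
    2 * ∑ c ∈ s, hammingNorm c ≤ #s * Fintype.card ι := by
  classical
  calc 2 * ∑ c ∈ s, hammingNorm c = ∑ t, 2 * #{c ∈ s | c t ≠ 0} := by
        simp only [hammingNorm, card_eq_sum_ones, sum_filter, ← mul_sum]
        rw [sum_comm]
    _ ≤ ∑ _t : ι, #s := sum_le_sum fun t _ => two_mul_card_filter_ne_zero_le hs t
    _ = #s * Fintype.card ι := by simp [mul_comm]

end BinaryWords

theorem sub_mem_of_mem_span_singleton_sup {M : Type*} [AddCommGroup M] [Module (ZMod 2) M]
    {W : Submodule (ZMod 2) M} {v c : M} (hc : c ∈ (ZMod 2) ∙ v ⊔ W) (hcW : c ∉ W) :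
    v - c ∈ W := by
  obtain ⟨y, hy, w, hw, rfl⟩ := Submodule.mem_sup.1 hc
  obtain ⟨a, rfl⟩ := Submodule.mem_span_singleton.1 hy
  obtain rfl | rfl : a = 0 ∨ a = 1 := (by decide : ∀ b : ZMod 2, b = 0 ∨ b = 1) a
  · exact absurd (by simpa using hw) hcW
  · simpa [sub_add_eq_sub_sub] using W.neg_mem hw

namespace kernelCode

variable {l : ℕ} (K : Matrix (Fin l) (Fin l) (ZMod 2))

theorem antitone : Antitone (kernelCode K) := fun _ _ h =>
  Submodule.span_mono (by rintro v ⟨i, hi, rfl⟩; exact ⟨i, h.trans hi, rfl⟩)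

theorem le_span_row_sup (i : Fin l) :
    kernelCode K i ≤ (ZMod 2) ∙ K i ⊔ kernelCode K (i + 1) := by
  refine Submodule.span_le.2 ?_
  rintro v ⟨j, hij, rfl⟩
  rcases hij.eq_or_lt with h | h
  · rw [Fin.val_inj.1 h]
    exact Submodule.mem_sup_left (Submodule.mem_span_singleton_self _)
  · exact Submodule.mem_sup_right (Submodule.subset_span ⟨j, h, rfl⟩)

theorem PD_le_hammingNorm (i : Fin l) {c : Fin l → ZMod 2} (hc : c ∈ kernelCode K i)
    (hc' : c ∉ kernelCode K (i + 1)) : PD K i ≤ hammingNorm c := by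
  refine Nat.sInf_le
    ⟨K i - c, sub_mem_of_mem_span_singleton_sup (le_span_row_sup K i hc) hc', ?_⟩
  change hammingDist (K i : Fin l → ZMod 2) (K i - c) = _
  rw [hammingDist_comm, hammingDist_eq_hammingNorm, neg_sub, sub_add_cancel]

theorem eq_span_range (φ : ℕ) :
    kernelCode K φ =
      Submodule.span (ZMod 2) (Set.range fun i : {i : Fin l // φ ≤ i} => K i) := by
  refine congrArg _ (Set.ext fun v => ⟨?_, ?_⟩)
  · rintro ⟨i, hi, rfl⟩
    exact ⟨⟨i, hi⟩, rfl⟩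
  · rintro ⟨⟨i, hi⟩, rfl⟩
    exact ⟨i, hi, rfl⟩

theorem finrank_eq (hK : IsUnit K.det) (φ : ℕ) :
    Module.finrank (ZMod 2) (kernelCode K φ) = l - φ := by
  have hrows : LinearIndependent (ZMod 2) K :=
    Matrix.linearIndependent_rows_iff_isUnit.2 ((Matrix.isUnit_iff_isUnit_det K).2 hK)
  rw [eq_span_range, finrank_span_eq_card (b := fun i : {i : Fin l // φ ≤ i} => K i)
      (hrows.comp _ Subtype.val_injective),
    Fintype.card_subtype]
  have := card_filter_add_card_filter_not (s := univ) (fun i : Fin l => (i : ℕ) < φ)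
  rw [Fin.card_filter_val_lt, card_univ, Fintype.card_fin] at this
  simp only [not_lt] at this
  omega

theorem natCard_eq (hK : IsUnit K.det) (φ : ℕ) : Nat.card (kernelCode K φ) = 2 ^ (l - φ) := by
  rw [Module.natCard_eq_pow_finrank (K := ZMod 2), finrank_eq K hK, Nat.card_zmod]

open Classical in
noncomputable def codewords (φ : ℕ) : Finset (Fin l → ZMod 2) := {c | c ∈ kernelCode K φ}

@[simp]
theorem mem_codewords {φ : ℕ} {c : Fin l → ZMod 2} :
    c ∈ codewords K φ ↔ c ∈ kernelCode K φ := by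
  simp [codewords]

theorem add_mem_codewords (φ : ℕ) :
    ∀ a ∈ codewords K φ, ∀ b ∈ codewords K φ, a + b ∈ codewords K φ := by
  simpa using fun a ha b hb => add_mem ha hb

theorem card_codewords (hK : IsUnit K.det) (φ : ℕ) : #(codewords K φ) = 2 ^ (l - φ) := by
  classical
  rw [codewords, ← Fintype.card_subtype, ← Nat.card_eq_fintype_card]
  exact natCard_eq K hK φ

theorem codewords_succ_subset (φ : ℕ) : codewords K (φ + 1) ⊆ codewords K φ := fun c hc => by
  simpa using antitone K φ.le_succ (by simpa using hc)

theorem pow_mul_PD_add_le (hK : IsUnit K.det) (i : Fin l) :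
    2 ^ (l - i) * PD K i + 2 * ∑ c ∈ codewords K (i + 1), hammingNorm c ≤
      2 * ∑ c ∈ codewords K i, hammingNorm c := by
  set layer := codewords K i \ codewords K (i + 1)
  have hcard : 2 * #layer = 2 ^ (l - i) := by
    have hpow : 2 ^ (l - i) = 2 * 2 ^ (l - (i + 1)) := by
      rw [← pow_succ']; congr 1; omega
    rw [card_sdiff_of_subset (codewords_succ_subset K i), card_codewords K hK,
      card_codewords K hK, hpow]
    omega
  have hlayer : #layer * PD K i ≤ ∑ c ∈ layer, hammingNorm c := by
    simpa using card_nsmul_le_sum layer hammingNorm (PD K i) fun c hc => by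
      simp only [layer, mem_sdiff, mem_codewords] at hc
      exact PD_le_hammingNorm K i hc.1 hc.2
  rw [← sum_sdiff (codewords_succ_subset K i), ← hcard]
  nlinarith

theorem sum_pow_mul_PD_le (hK : IsUnit K.det) (i : ℕ) :
    ∑ i' ∈ univ.filter (fun i' : Fin l => i ≤ (i' : ℕ)), 2 ^ (l - (i' : ℕ)) * PD K i' ≤
      2 * ∑ c ∈ codewords K i, hammingNorm c := by
  by_cases hi : i < l
  · have hsplit : univ.filter (fun i' : Fin l => i ≤ (i' : ℕ)) =
        cons ⟨i, hi⟩ (univ.filter fun i' : Fin l => i + 1 ≤ (i' : ℕ)) (by simp) := by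
      ext j
      simp only [mem_filter, mem_univ, true_and, mem_cons, Fin.ext_iff]
      omega
    rw [hsplit, sum_cons]
    exact (add_le_add_right (sum_pow_mul_PD_le hK (i + 1)) _).trans
      (pow_mul_PD_add_le K hK ⟨i, hi⟩)
  · rw [filter_false_of_mem fun j _ => by omega, sum_empty]
    exact Nat.zero_le _
termination_by l - i

end kernelCode

theorem stmt_9_general {l : ℕ} (K : Matrix (Fin l) (Fin l) (ZMod 2)) (hK : IsUnit K.det) :
    ∀ i : ℕ, i < l →
      ∑ i' ∈ Finset.univ.filter (fun i' : Fin l => i ≤ (i' : ℕ)),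
          2 ^ (l - (i' : ℕ)) * PD K i' ≤ 2 ^ (l - i) * l := by
  intro i _
  calc _ ≤ 2 * ∑ c ∈ kernelCode.codewords K i, hammingNorm c :=
        kernelCode.sum_pow_mul_PD_le K hK i
    _ ≤ #(kernelCode.codewords K i) * Fintype.card (Fin l) :=
        two_mul_sum_hammingNorm_le (kernelCode.add_mem_codewords K i)
    _ = 2 ^ (l - i) * l := by rw [kernelCode.card_codewords K hK, Fintype.card_fin]

theorem stmt_9 {l : ℕ} (K : Matrix (Fin l) (Fin l) (ZMod 2)) (hK : IsUnit K.det)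
    (hpos : ∀ i : Fin l, 0 < PD K i)
    (hmono : ∀ i j : Fin l, i ≤ j → PD K i ≤ PD K j) :
    ∀ i : ℕ, i < l →
      ∑ i' ∈ Finset.univ.filter (fun i' : Fin l => i ≤ (i' : ℕ)),
          2 ^ (l - (i' : ℕ)) * PD K i' ≤ 2 ^ (l - i) * l :=
  stmt_9_general K hK
end
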